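/- arXiv:2008.09423 — 3 statements merged into one kernel-verified Lean document; each statement's English description precedes it below -/
import Mathlib

section
/- Let 1 → N → H → G → 1 be an extension of groups (i.e., a surjective group homomorphism p : H → G with kernel N) such that N ≤ Z_n(H) for a fixed positive integer n. If G is finite, then γ_{n+1}(H) is finite. -/
/-!
As `ker p ≤ Z_n(H)` has finite index, this is Baer's theorem: if `Z_n(H)` has finite index,
then `γ_{n+1}(H)` is finite (Mathlib's `lowerCentralSeries n` is `γ_{n+1}`). Induct on `n`.
Since `Z_n(H) / Z(H) = Z_{n-1}(H / Z(H))`, induction shows that `γ_n(H) Z(H) / Z(H)` is finite.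
Put `K = γ_n(H) Z(H)`: then `Z(H)` has finite index in `K`, and `Z_n(H)` centralizes `K`
because `[γ_n(H), Z_n(H)] = 1` (three subgroup lemma), so `C_H(K)` has finite index in `H`.
For such a normal subgroup `K`, `[K, H]` is finite: `[K, K]` is finite by Schur's theorem, and
modulo `[K, K]` the commutators `[k, h]` take finitely many values (they only depend on `k Z(H)`
and `h C_H(K)`), commute with each other, and have finite order since
`[k, h]^m = [k^m, h] = 1` once `k^m ∈ Z(H)`; hence they generate a finite group.
Finally `γ_{n+1}(H) = [γ_n(H), H] ≤ [K, H]`.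
-/

open Subgroup
open scoped commutatorElement

section Commutators

variable {G : Type*} [Group G]

theorem commutatorElement_mul_left_of_commute {a b c : G} (h : Commute b c) :
    ⁅a * b, c⁆ = ⁅a, c⁆ := by
  rw [commutatorElement_mul_left_eq_conj_mul, h.commutator_eq, mul_one, mul_inv_cancel, one_mul]

theorem commutatorElement_mul_right_of_commute {a b c : G} (h : Commute a c) :
    ⁅a, b * c⁆ = ⁅a, b⁆ := by
  rw [commutatorElement_mul_right_eq_mul_conj, h.commutator_eq, mul_one, mul_inv_cancel_right]

theorem commutatorElement_pow_left_of_commute {A : Subgroup G} [A.Normal]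
    (hA : ∀ x ∈ A, ∀ y ∈ A, Commute x y) {a : G} (ha : a ∈ A) (g : G) (k : ℕ) :
    ⁅a ^ k, g⁆ = ⁅a, g⁆ ^ k := by
  induction k with
  | zero => simp
  | succ k ih =>
    have hag : ⁅a, g⁆ ∈ A := commutator_le_left A ⊤ (commutator_mem_commutator ha (mem_top g))
    rw [pow_succ, commutatorElement_mul_left_eq_conj_mul,
      (hA _ (pow_mem ha k) _ hag).eq, mul_inv_cancel_right, ih, pow_succ']

end Commutators

namespace Subgroup

variable {G : Type*} [Group G]

theorem finite_closure_of_commute_of_isOfFinOrder {S : Set G} (hS : S.Finite)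
    (hcomm : ∀ x ∈ S, ∀ y ∈ S, x * y = y * x) (hS_tors : ∀ x ∈ S, IsOfFinOrder x) :
    Finite (closure S) := by
  have : Finite S := hS
  have : IsMulCommutative (closure S) := isMulCommutative_closure hcomm
  open scoped IsMulCommutative in
  have hcomm' : ∀ x ∈ closure S, ∀ y ∈ closure S, Commute x y := fun x hx y hy ↦
    congrArg Subtype.val (mul_comm (⟨x, hx⟩ : closure S) ⟨y, hy⟩)
  have htors : ∀ x ∈ closure S, IsOfFinOrder x := fun x hx ↦ by
    induction hx using closure_induction with
    | mem x hx => exact hS_tors x hx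
    | one => exact IsOfFinOrder.one
    | mul x y hx hy hx' hy' => exact (hcomm' x hx y hy).isOfFinOrder_mul hx' hy'
    | inv x _ hx' => exact hx'.inv
  open scoped IsMulCommutative in
  exact CommGroup.finite_of_fg_isMulTorsion _ fun x ↦ Submonoid.isOfFinOrder_coe.mp (htors x x.2)

theorem finite_of_finite_ker_of_finite_map {G' : Type*} [Group G'] (f : G →* G')
    (S : Subgroup G) [Finite f.ker] [Finite (S.map f)] : Finite S := by
  rw [(f.domRestrict S).finite_iff_finite_ker_range, MonoidHom.ker_domRestrict,
    MonoidHom.domRestrict_range]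
  refine ⟨Finite.of_injective (fun x : f.ker.subgroupOf S ↦ (⟨x.1, x.2⟩ : f.ker)) ?_, inferInstance⟩
  exact fun x y h ↦ Subtype.ext (Subtype.ext (congrArg Subtype.val h :))

theorem commutator_commutator_le_of_rotate {H₁ H₂ H₃ N : Subgroup G} [N.Normal]
    (h1 : ⁅⁅H₂, H₃⁆, H₁⁆ ≤ N) (h2 : ⁅⁅H₃, H₁⁆, H₂⁆ ≤ N) : ⁅⁅H₁, H₂⁆, H₃⁆ ≤ N := by
  simp only [← QuotientGroup.ker_mk' N, ← map_eq_bot_iff, map_commutator] at h1 h2 ⊢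
  exact commutator_commutator_eq_bot_of_rotate h1 h2

theorem commutator_lowerCentralSeries_upperCentralSeries_le (i j : ℕ) :
    ⁅(⊤ : Subgroup G).lowerCentralSeries i, upperCentralSeries G (i + j + 1)⁆ ≤
      upperCentralSeries G j := by
  induction i generalizing j with
  | zero =>
    rw [lowerCentralSeries_zero, commutator_comm, zero_add]
    exact commutator_upperCentralSeries_top_le G j
  | succ i ih =>
    rw [lowerCentralSeries_succ]
    apply commutator_commutator_le_of_rotate
    · calc ⁅⁅⊤, upperCentralSeries G (i + 1 + j + 1)⁆, (⊤ : Subgroup G).lowerCentralSeries i⁆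
          ≤ ⁅upperCentralSeries G (i + j + 1), (⊤ : Subgroup G).lowerCentralSeries i⁆ := by
            refine commutator_mono ?_ le_rfl
            rw [commutator_comm, show i + 1 + j + 1 = i + j + 1 + 1 by lia]
            exact commutator_upperCentralSeries_top_le G _
        _ ≤ upperCentralSeries G j := by rw [commutator_comm]; exact ih j
    · calc ⁅⁅upperCentralSeries G (i + 1 + j + 1), (⊤ : Subgroup G).lowerCentralSeries i⁆, ⊤⁆
          ≤ ⁅upperCentralSeries G (j + 1), ⊤⁆ := by
            refine commutator_mono ?_ le_rfl
            rw [commutator_comm, show i + 1 + j + 1 = i + (j + 1) + 1 by lia]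
            exact ih (j + 1)
        _ ≤ upperCentralSeries G j := commutator_upperCentralSeries_top_le G j

theorem upperCentralSeries_le_centralizer_lowerCentralSeries (n : ℕ) :
    upperCentralSeries G (n + 1) ≤ centralizer ((⊤ : Subgroup G).lowerCentralSeries n : Set G) := by
  rw [← commutator_eq_bot_iff_le_centralizer, commutator_comm, ← le_bot_iff]
  exact commutator_lowerCentralSeries_upperCentralSeries_le n 0

theorem finite_commutators_top (A : Subgroup G) [(center G).IsFiniteRelIndex A]
    [(centralizer (A : Set G)).FiniteIndex] :
    {g | ∃ a ∈ A, ∃ b ∈ (⊤ : Subgroup G), ⁅a, b⁆ = g}.Finite := by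
  refine (Set.finite_range fun q : (A ⧸ (center G).subgroupOf A) × (G ⧸ centralizer (A : Set G)) ↦
    ⁅(q.1.out : G), q.2.out⁆).subset ?_
  rintro _ ⟨a, ha, b, -, rfl⟩
  refine ⟨(QuotientGroup.mk ⟨a, ha⟩, QuotientGroup.mk b), ?_⟩
  obtain ⟨z, hz⟩ := QuotientGroup.mk_out_eq_mul ((center G).subgroupOf A) ⟨a, ha⟩
  obtain ⟨c, hc⟩ := QuotientGroup.mk_out_eq_mul (centralizer (A : Set G)) b
  dsimp only
  rw [hz, hc, coe_mul, commutatorElement_mul_left_of_commute,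
    commutatorElement_mul_right_of_commute]
  · exact mem_centralizer_iff.mp c.2 a ha
  · exact (mem_center_iff.mp (mem_subgroupOf.mp z.2) _).symm

theorem _root_.finite_commutatorSet_of_finiteIndex_center (H : Type*) [Group H]
    [(center H).FiniteIndex] : Finite (commutatorSet H) := by
  have : (center H).IsFiniteRelIndex ⊤ := isFiniteRelIndex_top_iff.mpr ‹_›
  have : (centralizer ((⊤ : Subgroup H) : Set H)).FiniteIndex := by
    rwa [coe_top, centralizer_univ]
  convert ((⊤ : Subgroup H).finite_commutators_top).to_subtype using 3
  simp [commutatorSet]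

theorem finite_commutator_self (A : Subgroup G) [(center G).IsFiniteRelIndex A] :
    Finite (⁅A, A⁆ : Subgroup G) := by
  have : (center A).FiniteIndex := finiteIndex_of_le (H := (center G).subgroupOf A)
    fun x hx ↦ mem_center_iff.mpr fun y ↦ Subtype.ext (mem_center_iff.mp (mem_subgroupOf.mp hx) y)
  have := finite_commutatorSet_of_finiteIndex_center A
  rw [← map_subtype_commutator]
  exact Finite.of_surjective _ (A.subtype.subgroupMap_surjective _)

theorem finite_commutator_top (A : Subgroup G) [A.Normal] [(center G).IsFiniteRelIndex A]
    [(centralizer (A : Set G)).FiniteIndex] : Finite (⁅A, ⊤⁆ : Subgroup G) := by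
  have := A.finite_commutator_self
  let π := QuotientGroup.mk' ⁅A, A⁆
  have : Finite π.ker := by rw [QuotientGroup.ker_mk']; infer_instance
  suffices Finite ((⁅A, ⊤⁆ : Subgroup G).map π) from finite_of_finite_ker_of_finite_map π _
  have hcomm : ∀ x ∈ A.map π, ∀ y ∈ A.map π, Commute x y := by
    rintro _ ⟨x, hx, rfl⟩ _ ⟨y, hy, rfl⟩
    rw [← commutatorElement_eq_one_iff_commute, ← map_commutatorElement]
    exact (QuotientGroup.eq_one_iff _).mpr (commutator_mem_commutator hx hy)
  have : (A.map π).Normal := ‹A.Normal›.map π (QuotientGroup.mk'_surjective _)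
  set X := {g | ∃ a ∈ A, ∃ b ∈ (⊤ : Subgroup G), ⁅a, b⁆ = g}
  have hXA : X ⊆ A := fun z hz ↦ commutator_le_left A ⊤ (subset_closure hz)
  rw [commutator_def A ⊤, MonoidHom.map_closure]
  refine finite_closure_of_commute_of_isOfFinOrder (A.finite_commutators_top.image π) ?_ ?_
  · rintro _ ⟨x, hx, rfl⟩ _ ⟨y, hy, rfl⟩
    exact hcomm _ (mem_map_of_mem π (hXA hx)) _ (mem_map_of_mem π (hXA hy))
  · rintro _ ⟨_, ⟨a, ha, g, -, rfl⟩, rfl⟩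
    obtain ⟨k, hk, -, hak⟩ :=
      exists_pow_mem_of_relIndex_ne_zero (relIndex_ne_zero (H := center G)) ha
    refine isOfFinOrder_iff_pow_eq_one.mpr ⟨k, hk, ?_⟩
    rw [map_commutatorElement, ← commutatorElement_pow_left_of_commute hcomm (mem_map_of_mem π ha),
      ← map_pow, ← map_commutatorElement, commutatorElement_eq_one_iff_mul_comm.mpr
        (mem_center_iff.mp hak.1 g).symm, map_one]

theorem finite_lowerCentralSeries_of_finiteIndex_upperCentralSeries (H : Type*) [Group H] (n : ℕ)
    [(upperCentralSeries H n).FiniteIndex] : Finite ((⊤ : Subgroup H).lowerCentralSeries n) := by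
  induction n generalizing H with
  | zero =>
    have h := FiniteIndex.index_ne_zero (H := upperCentralSeries H 0)
    rw [upperCentralSeries_zero, index_bot] at h
    have : Finite H := Nat.finite_of_card_ne_zero h
    infer_instance
  | succ n ih =>
    have : (upperCentralSeries (H ⧸ center H) n).FiniteIndex := ⟨by
      rw [← index_comap_of_surjective _ (QuotientGroup.mk'_surjective _),
        comap_upperCentralSeries_quotient_center]
      exact FiniteIndex.index_ne_zero⟩
    have := ih (H ⧸ center H)
    set T := (⊤ : Subgroup H).lowerCentralSeries n
    have hT : T.map (QuotientGroup.mk' (center H)) =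
        (⊤ : Subgroup (H ⧸ center H)).lowerCentralSeries n := by
      rw [map_lowerCentralSeries, map_top_of_surjective _ (QuotientGroup.mk'_surjective _)]
    have : (center H).IsFiniteRelIndex (T ⊔ center H) := ⟨by
      rw [relIndex_sup_right, ← QuotientGroup.ker_mk' (center H), relIndex_ker, hT]
      exact Nat.card_pos.ne'⟩
    have : (centralizer ((T ⊔ center H : Subgroup H) : Set H)).FiniteIndex := by
      refine finiteIndex_of_le (H := upperCentralSeries H (n + 1)) ?_
      rw [le_centralizer_iff]
      exact sup_le (le_centralizer_iff.mp (upperCentralSeries_le_centralizer_lowerCentralSeries n))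
        (center_le_centralizer _)
    have := finite_commutator_top (T ⊔ center H)
    exact Finite.of_injective _ (inclusion_injective (commutator_mono le_sup_left le_rfl :
      ⁅T, ⊤⁆ ≤ ⁅T ⊔ center H, ⊤⁆))

end Subgroup

theorem finite_lowerCentralSeries_of_ker_le_upperCentralSeries_general
    {H G : Type*} [Group H] [Group G] (p : H →* G)
    (n : ℕ) (hker : p.ker ≤ Subgroup.upperCentralSeries H n)
    (hG : Finite G) :
    Finite ((⊤ : Subgroup H).lowerCentralSeries n) := by
  have : (Subgroup.upperCentralSeries H n).FiniteIndex := finiteIndex_of_le hker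
  exact finite_lowerCentralSeries_of_finiteIndex_upperCentralSeries H n

/-- If `p : H → G` is a surjective group homomorphism whose kernel is contained in the
`n`-th term of the upper central series of `H` (for a positive integer `n`), and `G` is
finite, then `γ_{n+1}(H) = lowerCentralSeries H n` is finite. -/
theorem finite_lowerCentralSeries_of_ker_le_upperCentralSeries
    {H G : Type*} [Group H] [Group G] (p : H →* G) (hp : Function.Surjective p)
    (n : ℕ) (hn : 0 < n) (hker : p.ker ≤ Subgroup.upperCentralSeries H n)
    (hG : Finite G) :
    Finite ((⊤ : Subgroup H).lowerCentralSeries n) :=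
  finite_lowerCentralSeries_of_ker_le_upperCentralSeries_general p n hker hG
end

section
/- Let F be a free group and R a normal subgroup of F such that the quotient G = F/R is a Schur group; in terms of the presentation this means R · [F, F] = F (G is perfect) and R ∩ [F, F] = [R, F] (the Schur multiplier of G, given by Hopf's formula (R ∩ [F, F])/[R, F], is trivial). Then for every k ≥ 1, R ∩ Γ_{k+1}(F) = Γ_{k+1}(R, F). -/
/-!
With `S = Γ_k(F)` the induction step is `R ⊓ ⁅S, S⁆ = ⁅R ⊓ S, S⁆`, and only `≤` needs work.
Perfectness of `F ⧸ R` gives `R ⊔ S = F`, so `S` maps onto `F ⧸ R`, and freeness of `F` yields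
`ψ : F →* S` with `ψ f ≡ f mod R`. For `x ∈ R ⊓ ⁅S, S⁆`, Hopf's condition puts `x` in `⁅R, F⁆`,
so `ψ x ∈ ⁅R ⊓ S, S⁆`. Moreover `ψ` and the identity differ on `S` by elements of `R ⊓ S`, which
are central modulo `⁅R ⊓ S, S⁆`, so they agree modulo it on `⁅S, S⁆`. Hence `x ∈ ⁅R ⊓ S, S⁆`.
-/

/-- The relative series `Γ_{k+1}(R, F)`: `Γ₁(R, F) = R` and
`Γ_{k+1}(R, F) = [Γ_k(R, F), Γ_k(F)]`, so `relDerivedSeries R k = Γ_{k+1}(R, F)`. -/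
def relDerivedSeries {F : Type*} [Group F] (R : Subgroup F) : ℕ → Subgroup F
  | 0 => R
  | k + 1 => ⁅relDerivedSeries R k, derivedSeries F k⁆

open Subgroup
open scoped commutatorElement

section

variable {G H : Type*} [Group G] [Group H]

theorem Subgroup.map_mk'_eq_top_iff {R K : Subgroup G} [R.Normal] :
    K.map (QuotientGroup.mk' R) = ⊤ ↔ R ⊔ K = ⊤ := by
  rw [← (comap_injective (QuotientGroup.mk'_surjective R)).eq_iff, comap_map_eq, comap_top,
    QuotientGroup.ker_mk', sup_comm]

theorem sup_derivedSeries_eq_top {R : Subgroup G} [R.Normal] (h : R ⊔ commutator G = ⊤)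
    (k : ℕ) : R ⊔ derivedSeries G k = ⊤ := by
  have hsurj := QuotientGroup.mk'_surjective R
  rw [← derivedSeries_one, ← map_mk'_eq_top_iff, map_derivedSeries_eq hsurj] at h
  have : Group.IsPerfect (G ⧸ R) := ⟨by rwa [← derivedSeries_one]⟩
  rw [← map_mk'_eq_top_iff, map_derivedSeries_eq hsurj, Group.IsPerfect.derivedSeries_eq_top]

theorem commutatorElement_mul_left_of_mem_center {a b z : G} (hz : z ∈ center G) :
    ⁅a * z, b⁆ = ⁅a, b⁆ := by
  have hzb : z * b * z⁻¹ = b := by rw [← mem_center_iff.mp hz b, mul_inv_cancel_right]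
  calc ⁅a * z, b⁆ = a * (z * b * z⁻¹) * a⁻¹ * b⁻¹ := by group
    _ = ⁅a, b⁆ := by rw [hzb, commutatorElement_def]

theorem commutatorElement_mul_mul_of_mem_center {a b z w : G} (hz : z ∈ center G)
    (hw : w ∈ center G) : ⁅a * z, b * w⁆ = ⁅a, b⁆ := by
  rw [commutatorElement_mul_left_of_mem_center hz, ← commutatorElement_inv,
    commutatorElement_mul_left_of_mem_center hw, commutatorElement_inv]

theorem commutator_le_eqLocus_of_inv_mul_mem_center {f g : G →* H}
    (h : ∀ x, (g x)⁻¹ * f x ∈ center H) : commutator G ≤ f.eqLocus g := by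
  rw [commutator_def, commutator_le]
  intro a _ b _
  have hf : ∀ x, f x = g x * ((g x)⁻¹ * f x) := fun x => (mul_inv_cancel_left _ _).symm
  change f ⁅a, b⁆ = g ⁅a, b⁆
  rw [map_commutatorElement, map_commutatorElement, hf a, hf b,
    commutatorElement_mul_mul_of_mem_center (h a) (h b)]

theorem map_mk'_le_center (N : Subgroup G) [N.Normal] :
    N.map (QuotientGroup.mk' ⁅N, ⊤⁆) ≤ center (G ⧸ ⁅N, ⊤⁆) := by
  rw [← commutator_top_right_eq_bot_iff_le_center,
    ← map_top_of_surjective _ (QuotientGroup.mk'_surjective _), ← map_commutator,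
    Subgroup.map_eq_bot_iff, QuotientGroup.ker_mk']

theorem inv_mul_mem_commutator_of_inv_mul_mem {f g : G →* H} {N : Subgroup H} [N.Normal]
    (h : ∀ x, (g x)⁻¹ * f x ∈ N) {x : G} (hx : x ∈ commutator G) :
    (g x)⁻¹ * f x ∈ ⁅N, (⊤ : Subgroup H)⁆ := by
  let π := QuotientGroup.mk' ⁅N, (⊤ : Subgroup H)⁆
  have hle : commutator G ≤ (π.comp f).eqLocus (π.comp g) :=
    commutator_le_eqLocus_of_inv_mul_mem_center fun y => by
      simpa [π] using map_mk'_le_center N (mem_map_of_mem π (h y))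
  exact QuotientGroup.eq.mp (hle hx).symm

theorem commutator_inf_le_inf_commutator (R S : Subgroup G) [R.Normal] :
    ⁅R ⊓ S, S⁆ ≤ R ⊓ ⁅S, S⁆ :=
  le_inf ((commutator_mono inf_le_left le_top).trans (commutator_le_left R ⊤))
    (commutator_mono inf_le_right le_rfl)

end

theorem IsFreeGroup.exists_comp_eq {F H Q : Type*} [Group F] [IsFreeGroup F] [Group H]
    [Group Q] {p : H →* Q} (hp : Function.Surjective p) (f : F →* Q) :
    ∃ g : F →* H, p.comp g = f := by
  choose s hs using fun x => hp (f (IsFreeGroup.of x))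
  exact ⟨IsFreeGroup.lift s, IsFreeGroup.ext_hom fun x => by simp [hs]⟩

section Free

variable {F : Type*} [Group F] [IsFreeGroup F]

theorem exists_hom_inv_mul_mem_of_sup_eq_top {R S : Subgroup F} [R.Normal] (h : R ⊔ S = ⊤) :
    ∃ ψ : F →* S, ∀ x, x⁻¹ * ψ x ∈ R := by
  have hsurj : Function.Surjective ((QuotientGroup.mk' R).comp S.subtype) := by
    rw [← MonoidHom.range_eq_top, MonoidHom.range_comp, range_subtype, map_mk'_eq_top_iff, h]
  obtain ⟨ψ, hψ⟩ := IsFreeGroup.exists_comp_eq hsurj (QuotientGroup.mk' R)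
  exact ⟨ψ, fun x => QuotientGroup.eq.mp (DFunLike.congr_fun hψ x).symm⟩

theorem inf_commutator_eq_of_sup_eq_top {R S : Subgroup F} [R.Normal] (hsup : R ⊔ S = ⊤)
    (hmult : R ⊓ commutator F ≤ ⁅R, ⊤⁆) : R ⊓ ⁅S, S⁆ = ⁅R ⊓ S, S⁆ := by
  refine le_antisymm ?_ (commutator_inf_le_inf_commutator R S)
  obtain ⟨ψ, hψ⟩ := exists_hom_inv_mul_mem_of_sup_eq_top hsup
  set N := R.subgroupOf S
  have hψR : R.map ψ ≤ N := by
    rintro _ ⟨r, hr, rfl⟩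
    exact mem_subgroupOf.mpr ((R.mul_mem_cancel_left (inv_mem hr)).mp (hψ r))
  have hψS : ∀ s : S, s⁻¹ * ψ s ∈ N := fun s => mem_subgroupOf.mpr (hψ s)
  rintro x ⟨hxR, hxS⟩
  have hxψ : ψ x ∈ ⁅N, (⊤ : Subgroup S)⁆ := by
    have hx : x ∈ ⁅R, ⊤⁆ := hmult ⟨hxR, commutator_mono le_top le_top hxS⟩
    exact (map_commutator R (⊤ : Subgroup F) ψ).trans_le (commutator_mono hψR le_top)
      (mem_map_of_mem ψ hx)
  rw [← map_subtype_commutator] at hxS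
  obtain ⟨y, hy, rfl⟩ := hxS
  have hyψ : y⁻¹ * ψ y ∈ ⁅N, ⊤⁆ :=
    inv_mul_mem_commutator_of_inv_mul_mem (f := ψ.comp S.subtype) (g := .id S) hψS hy
  have hyN : y ∈ ⁅N, ⊤⁆ := inv_mem_iff.mp ((mul_mem_cancel_right hxψ).mp hyψ)
  have hmap : map S.subtype ⁅N, ⊤⁆ = ⁅R ⊓ S, S⁆ := by
    rw [map_commutator, subgroupOf_map_subtype, ← MonoidHom.range_eq_map, range_subtype]
  exact hmap ▸ mem_map_of_mem _ hyN

end Free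

/-- Let `F` be a free group and `R` a normal subgroup of `F` such that `F ⧸ R` is a
Schur group, i.e. `R · [F, F] = F` (perfectness) and `R ∩ [F, F] = [R, F]` (triviality of
the Schur multiplier via Hopf's formula). Then for every `k ≥ 1`,
`R ∩ Γ_{k+1}(F) = Γ_{k+1}(R, F)`. -/
theorem inf_derivedSeries_eq_relDerivedSeries_of_schur
    {F : Type*} [Group F] [IsFreeGroup F] (R : Subgroup F) [R.Normal]
    (hperf : R ⊔ commutator F = ⊤)
    (hmult : R ⊓ commutator F = ⁅R, (⊤ : Subgroup F)⁆) :
    ∀ k, 1 ≤ k → R ⊓ derivedSeries F k = relDerivedSeries R k := by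
  intro k hk
  induction k, hk using Nat.le_induction with
  | base => rw [derivedSeries_one, hmult]; rfl
  | succ k _ ih =>
    rw [derivedSeries_succ, inf_commutator_eq_of_sup_eq_top (sup_derivedSeries_eq_top hperf k)
      hmult.le, ih]
    rfl
end

section
/- Let F be a free group and R a normal subgroup of F such that the quotient group F/R is finite, and let k ≥ 1. Then the quotient group (R ∩ Γ_{k+1}(F))/Γ_{k+1}(R, F) is finite. -/
open scoped commutatorElement

section

variable {G : Type*} [Group G]

theorem commutatorElement_mul_mem_center {z w : G} (hz : z ∈ Subgroup.center G)
    (hw : w ∈ Subgroup.center G) (a b : G) : ⁅a * z, b * w⁆ = ⁅a, b⁆ := by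
  have hzc : ∀ c : G, ⁅z, c⁆ = 1 := fun c =>
    commutatorElement_eq_one_iff_mul_comm.mpr (Subgroup.mem_center_iff.mp hz c).symm
  have hwc : ∀ c : G, ⁅c, w⁆ = 1 := fun c =>
    commutatorElement_eq_one_iff_mul_comm.mpr (Subgroup.mem_center_iff.mp hw c)
  rw [commutatorElement_mul_left_eq_conj_mul, hzc, commutatorElement_mul_right_eq_mul_conj,
    hwc]
  group

theorem finite_commutatorSet_of_finite_quotient_center [Finite (G ⧸ Subgroup.center G)] :
    Finite (commutatorSet G) := by
  have hsub : commutatorSet G ⊆ Set.range fun p : (G ⧸ Subgroup.center G) ×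
      (G ⧸ Subgroup.center G) => ⁅p.1.out, p.2.out⁆ := by
    rintro _ ⟨a, b, rfl⟩
    obtain ⟨z, hz⟩ := QuotientGroup.mk_out_eq_mul (Subgroup.center G) a
    obtain ⟨w, hw⟩ := QuotientGroup.mk_out_eq_mul (Subgroup.center G) b
    exact ⟨(a, b), by simp only [hz, hw, commutatorElement_mul_mem_center z.2 w.2]⟩
  exact (Set.finite_range _).subset hsub

theorem finite_commutator_of_finite_quotient_center [Finite (G ⧸ Subgroup.center G)] :
    Finite (commutator G) :=
  have := finite_commutatorSet_of_finite_quotient_center (G := G)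
  inferInstance

theorem Subgroup.subgroupOf_le_center_of_commutator_eq_bot {N K : Subgroup G}
    (h : ⁅N, K⁆ = ⊥) : N.subgroupOf K ≤ Subgroup.center K := by
  intro x hx
  rw [Subgroup.mem_center_iff]
  intro y
  exact Subtype.ext (Subgroup.commutator_eq_bot_iff_le_centralizer.mp h hx y y.2)

theorem QuotientGroup.finite_quotient_subgroupOf_of_map_le {N H : Subgroup G} [N.Normal]
    {S : Subgroup (G ⧸ N)} [Finite S] (hS : H.map (QuotientGroup.mk' N) ≤ S) :
    Finite (H ⧸ N.subgroupOf H) := by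
  let f : H →* G ⧸ N := (QuotientGroup.mk' N).comp H.subtype
  have hker : f.ker = N.subgroupOf H := by
    ext x
    simp [f, Subgroup.mem_subgroupOf]
  have hrange : f.range = H.map (QuotientGroup.mk' N) := by
    rw [MonoidHom.range_comp, Subgroup.range_subtype]
  have : Finite f.range := .of_injective _ (Subgroup.inclusion_injective (hrange ▸ hS))
  rw [← hker]
  exact .of_equiv _ (QuotientGroup.quotientKerEquivRange f).symm.toEquiv

end

namespace relDerivedSeries

variable {G : Type*} [Group G] (R : Subgroup G)

instance normal [R.Normal] (k : ℕ) : (relDerivedSeries R k).Normal := by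
  induction k with
  | zero => assumption
  | succ k ih => exact Subgroup.commutator_normal _ _

theorem le_self [R.Normal] (k : ℕ) : relDerivedSeries R k ≤ R := by
  induction k with
  | zero => exact le_rfl
  | succ k ih => exact (Subgroup.commutator_le_left _ _).trans ih

theorem le_map {G' : Type*} [Group G'] {f : G →* G'} (hf : Function.Surjective f) (k : ℕ) :
    relDerivedSeries (R.map f) k ≤ (relDerivedSeries R k).map f := by
  induction k with
  | zero => exact le_rfl
  | succ k ih =>
    calc ⁅relDerivedSeries (R.map f) k, derivedSeries G' k⁆
        ≤ ⁅(relDerivedSeries R k).map f, (derivedSeries G k).map f⁆ :=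
          Subgroup.commutator_mono ih (derivedSeries_le_map_derivedSeries hf k)
      _ = (⁅relDerivedSeries R k, derivedSeries G k⁆).map f :=
          (Subgroup.map_commutator _ _ f).symm

theorem map_mk'_eq_bot [R.Normal] (k : ℕ) :
    relDerivedSeries (R.map (QuotientGroup.mk' (relDerivedSeries R k))) k = ⊥ :=
  eq_bot_iff.mpr <| (le_map R (QuotientGroup.mk'_surjective _) k).trans
    (QuotientGroup.map_mk'_self _).le

instance finite_quotient_map_mk' [R.Normal] [Finite (G ⧸ R)] (k : ℕ) :
    Finite ((G ⧸ relDerivedSeries R k) ⧸ R.map (QuotientGroup.mk' (relDerivedSeries R k))) :=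
  .of_equiv _ (QuotientGroup.quotientQuotientEquivQuotient _ R (le_self R k)).symm.toEquiv

end relDerivedSeries

theorem finite_derivedSeries_of_relDerivedSeries_eq_bot (k : ℕ) :
    ∀ {G : Type*} [Group G] (R : Subgroup G) [R.Normal] [Finite (G ⧸ R)],
      relDerivedSeries R k = ⊥ → Finite (derivedSeries G k) := by
  induction k with
  | zero =>
    intro G _ R _ _ hR
    cases (hR : R = ⊥)
    have : Finite G := .of_equiv _ QuotientGroup.quotientBot.toEquiv
    infer_instance
  | succ k ih =>
    intro G _ R _ _ hR
    set N := relDerivedSeries R k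
    set K := derivedSeries G k
    have : Finite (derivedSeries (G ⧸ N) k) :=
      ih (R.map (QuotientGroup.mk' N)) (relDerivedSeries.map_mk'_eq_bot R k)
    have : Finite (K ⧸ N.subgroupOf K) :=
      QuotientGroup.finite_quotient_subgroupOf_of_map_le (map_derivedSeries_le_derivedSeries _ k)
    have : Finite (K ⧸ Subgroup.center K) := by
      have := Subgroup.finiteIndex_of_finite_quotient (H := N.subgroupOf K)
      have := Subgroup.finiteIndex_of_le (Subgroup.subgroupOf_le_center_of_commutator_eq_bot hR)
      infer_instance
    have := finite_commutator_of_finite_quotient_center (G := K)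
    rw [derivedSeries_succ, ← K.map_subtype_commutator]
    exact .of_equiv _ (Subgroup.equivMapOfInjective _ _ K.subtype_injective).toEquiv

theorem finite_derivedSeries_quotient_relDerivedSeries {G : Type*} [Group G] (R : Subgroup G)
    [R.Normal] [Finite (G ⧸ R)] (k : ℕ) :
    Finite (derivedSeries (G ⧸ relDerivedSeries R k) k) :=
  finite_derivedSeries_of_relDerivedSeries_eq_bot k _ (relDerivedSeries.map_mk'_eq_bot R k)

theorem finite_derived_baer_invariant_of_finite_quotient_general
    {F : Type*} [Group F] (R : Subgroup F) [R.Normal]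
    (hfin : Finite (F ⧸ R)) (k : ℕ) :
    Finite ((R ⊓ derivedSeries F k : Subgroup F) ⧸
      (relDerivedSeries R k).subgroupOf (R ⊓ derivedSeries F k)) := by
  have := finite_derivedSeries_quotient_relDerivedSeries R k
  exact QuotientGroup.finite_quotient_subgroupOf_of_map_le
    ((Subgroup.map_mono inf_le_right).trans (map_derivedSeries_le_derivedSeries _ k))

/-- Let `F` be a free group and `R` a normal subgroup of `F` with `F ⧸ R` finite, and
`k ≥ 1`. Then the Baer invariant `(R ∩ Γ_{k+1}(F)) / Γ_{k+1}(R, F)` of `F ⧸ R` is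
finite. -/
theorem finite_derived_baer_invariant_of_finite_quotient
    {F : Type*} [Group F] [IsFreeGroup F] (R : Subgroup F) [R.Normal]
    (hfin : Finite (F ⧸ R)) (k : ℕ) (hk : 1 ≤ k) :
    Finite ((R ⊓ derivedSeries F k : Subgroup F) ⧸
      (relDerivedSeries R k).subgroupOf (R ⊓ derivedSeries F k)) :=
  finite_derived_baer_invariant_of_finite_quotient_general R hfin k
end
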